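/- arXiv:math-ph/0307027 — 2 statements merged into one kernel-verified Lean document; each statement's English description precedes it below -/
import Mathlib

section
/- For a steady Korteweg fluid (no momentum balance assumed), at every point of B the following identity holds: −ι grad p̄ = ϑ grad η − grad ξ + ι grad p̌ − ι² grad(div(ρ ∂_gφ)) − (grad(∂_gφ))ᵀ grad ι − ι (div(ρ ∂_gφ)) grad ι, where (grad(∂_gφ))ᵀ grad ι has components Σ_j ∂_i((∂_gφ)_j) ∂_jι and all partial derivatives of φ and χ are evaluated along the fields. -/
noncomputable section

/-- Points of ℝ³. -/
abbrev V3 : Type := Fin 3 → ℝ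

/-- Partial derivative ∂ᵢ of a scalar field on ℝ³. -/
def pd (i : Fin 3) (f : V3 → ℝ) (x : V3) : ℝ :=
  fderiv ℝ f x (Pi.single i 1)

/-- Cross product on ℝ³. -/
def cross (a b : V3) : V3 :=
  ![a 1 * b 2 - a 2 * b 1,
    a 2 * b 0 - a 0 * b 2,
    a 0 * b 1 - a 1 * b 0]

/-- Curl of a vector field on ℝ³. -/
def curl (u : V3 → V3) (x : V3) : V3 :=
  ![pd 1 (fun y => u y 2) x - pd 2 (fun y => u y 1) x,
    pd 2 (fun y => u y 0) x - pd 0 (fun y => u y 2) x,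
    pd 0 (fun y => u y 1) x - pd 1 (fun y => u y 0) x]

/-- A steady Korteweg fluid on an open set `B ⊆ ℝ³`: smooth fields `ρ > 0`
(mass density), `η` (entropy), `v` (velocity), a smooth potential
`φ = φ(ι, g, η)` and a smooth kinetic co-energy `χ = χ(ι, ι̇)`. -/
structure KortewegFluid where
  B : Set V3
  hB : IsOpen B
  ρ : V3 → ℝ
  η : V3 → ℝ
  v : V3 → V3
  φ : ℝ × V3 × ℝ → ℝ
  χ : ℝ × ℝ → ℝ
  hρ : ContDiffOn ℝ (⊤ : ℕ∞) ρ B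
  hη : ContDiffOn ℝ (⊤ : ℕ∞) η B
  hv : ContDiffOn ℝ (⊤ : ℕ∞) v B
  hφ : ContDiff ℝ (⊤ : ℕ∞) φ
  hχ : ContDiff ℝ (⊤ : ℕ∞) χ
  hρpos : ∀ x ∈ B, 0 < ρ x

namespace KortewegFluid

variable (K : KortewegFluid)

/-- Specific volume `ι = 1/ρ`. -/
def ι (x : V3) : ℝ := (K.ρ x)⁻¹

/-- The point `(ι(x), grad ι(x), η(x))` at which `φ` and its partial
derivatives are evaluated. -/
def pt (x : V3) : ℝ × V3 × ℝ := (K.ι x, fun i => pd i K.ι x, K.η x)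

/-- `∂_ιφ` evaluated along the fields. -/
def dφι (x : V3) : ℝ := fderiv ℝ K.φ (K.pt x) (1, 0, 0)

/-- `∂_gφ` (vector of partial derivatives of `φ` w.r.t. the gradient slot)
evaluated along the fields. -/
def dφg (x : V3) : V3 := fun j => fderiv ℝ K.φ (K.pt x) (0, Pi.single j 1, 0)

/-- Temperature `ϑ = ∂_ηφ` evaluated along the fields. -/
def temp (x : V3) : ℝ := fderiv ℝ K.φ (K.pt x) (0, 0, 1)

/-- Convective rate `ι̇ = v · grad ι`. -/
def ιdot (x : V3) : ℝ := ∑ j, K.v x j * pd j K.ι x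

/-- `∂_ιχ` evaluated along the fields. -/
def dχι (x : V3) : ℝ := fderiv ℝ K.χ (K.ι x, K.ιdot x) (1, 0)

/-- The field `Π : x ↦ ∂_ι̇χ(ι(x), ι̇(x))`. -/
def Pi' (x : V3) : ℝ := fderiv ℝ K.χ (K.ι x, K.ιdot x) (0, 1)

/-- `div(ρ ∂_gφ)`. -/
def divρg (x : V3) : ℝ := ∑ j, pd j (fun y => K.ρ y * K.dφg y j) x

/-- Kinetic pressure `p̌ = ρι (v·grad Π) − ∂_ιχ`. -/
def pcheck (x : V3) : ℝ :=
  K.ρ x * K.ι x * (∑ j, K.v x j * pd j K.Pi' x) - K.dχι x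

/-- Pressure `p̄ = −ρι ∂_ιφ + ι div(ρ ∂_gφ) − p̌`. -/
def pbar (x : V3) : ℝ :=
  -(K.ρ x * K.ι x * K.dφι x) + K.ι x * K.divρg x - K.pcheck x

/-- Specific enthalpy `ξ = φ − ι ∂_ιφ − ∂_gφ · grad ι`. -/
def ξ (x : V3) : ℝ :=
  K.φ (K.pt x) - K.ι x * K.dφι x - ∑ j, K.dφg x j * pd j K.ι x

/-- Total enthalpy `h = (1/2)|v|² + ξ`. -/
def htot (x : V3) : ℝ := (1 / 2) * (∑ k, (K.v x k) ^ 2) + K.ξ x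

/-- Korteweg stress `T^E = grad ι ⊗ ρ ∂_gφ`. -/
def TE (x : V3) (i j : Fin 3) : ℝ := pd i K.ι x * (K.ρ x * K.dφg x j)

/-- Steady momentum balance `ρ (Dv)v = div T` with `T = −p̄ I − T^E`
(stated componentwise). -/
def MomentumBalance : Prop :=
  ∀ x ∈ K.B, ∀ i : Fin 3,
    K.ρ x * ∑ j, pd j (fun y => K.v y i) x * K.v x j
      = ∑ j, pd j (fun y => -(K.pbar y) * (if i = j then (1:ℝ) else 0) - K.TE y i j) x

end KortewegFluid

/-!
On `B` we have `ρι = 1`, so near every point `p̄ = −∂_ιφ + ι div(ρ ∂_gφ) − p̌` and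
`grad p̄ = −grad ∂_ιφ + ι grad div(ρ ∂_gφ) + div(ρ ∂_gφ) grad ι − grad p̌`.
The enthalpy `ξ` is the partial Legendre transform of `φ` in its first two slots: in the chain
rule for `grad ξ` the terms `∂_ιφ grad ι` and `Σ_j (∂_gφ)_j grad ∂_jι` cancel against the
product rule, leaving `grad ξ = ϑ grad η − ι grad ∂_ιφ − (grad ∂_gφ)ᵀ grad ι`.
Eliminating `grad ∂_ιφ` between the two formulas gives the identity.
-/

open Filter Topology
open scoped ContDiff

section PartialDerivative

variable {f g : V3 → ℝ} {x : V3}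

lemma pd_congr_of_eventuallyEq (h : f =ᶠ[𝓝 x] g) (i : Fin 3) : pd i f x = pd i g x := by
  rw [pd, pd, h.fderiv_eq]

lemma pd_add (hf : DifferentiableAt ℝ f x) (hg : DifferentiableAt ℝ g x) (i : Fin 3) :
    pd i (fun y => f y + g y) x = pd i f x + pd i g x := by
  simp [pd, fderiv_fun_add hf hg]

lemma pd_sub (hf : DifferentiableAt ℝ f x) (hg : DifferentiableAt ℝ g x) (i : Fin 3) :
    pd i (fun y => f y - g y) x = pd i f x - pd i g x := by
  simp [pd, fderiv_fun_sub hf hg]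

lemma pd_neg (i : Fin 3) : pd i (fun y => -f y) x = -pd i f x := by
  simp [pd, fderiv_fun_neg]

lemma pd_mul (hf : DifferentiableAt ℝ f x) (hg : DifferentiableAt ℝ g x) (i : Fin 3) :
    pd i (fun y => f y * g y) x = f x * pd i g x + g x * pd i f x := by
  simp [pd, fderiv_fun_mul hf hg]

lemma pd_sum {α : Type*} {s : Finset α} {F : α → V3 → ℝ}
    (hF : ∀ j ∈ s, DifferentiableAt ℝ (F j) x) (i : Fin 3) :
    pd i (fun y => ∑ j ∈ s, F j y) x = ∑ j ∈ s, pd i (F j) x := by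
  simp [pd, fderiv_fun_sum hF]

lemma ContDiffOn.pd {s : Set V3} (hs : IsOpen s) (hf : ContDiffOn ℝ ∞ f s) (i : Fin 3) :
    ContDiffOn ℝ ∞ (pd i f) s :=
  (hf.fderiv_of_isOpen hs le_rfl).clm_apply contDiffOn_const

lemma ContDiff.contDiffOn_fderiv_comp_apply {D E : Type*} [NormedAddCommGroup D] [NormedSpace ℝ D]
    [NormedAddCommGroup E] [NormedSpace ℝ E] {φ : E → ℝ} (hφ : ContDiff ℝ ∞ φ) {c : D → E}
    {s : Set D} (hc : ContDiffOn ℝ ∞ c s) (w : E) :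
    ContDiffOn ℝ ∞ (fun y => fderiv ℝ φ (c y) w) s :=
  ((hφ.fderiv_right le_rfl).comp_contDiffOn hc).clm_apply contDiffOn_const

end PartialDerivative

lemma ContinuousLinearMap.apply_prod_pi_prod {ι : Type*} [Fintype ι] [DecidableEq ι]
    (L : ℝ × (ι → ℝ) × ℝ →L[ℝ] ℝ) (a : ℝ) (u : ι → ℝ) (b : ℝ) :
    L (a, u, b) = a * L (1, 0, 0) + ∑ j, u j * L (0, Pi.single j 1, 0) + b * L (0, 0, 1) := by
  have hsplit : (a, u, b) = a • ((1 : ℝ), (0 : ι → ℝ), (0 : ℝ))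
      + ∑ j, u j • ((0 : ℝ), (Pi.single j 1 : ι → ℝ), (0 : ℝ))
      + b • ((0 : ℝ), (0 : ι → ℝ), (1 : ℝ)) := by
    ext <;> simp [Prod.fst_sum, Prod.snd_sum, Pi.single_apply]
  rw [hsplit]
  simp only [map_add, map_smul, map_sum, smul_eq_mul]

lemma pd_comp_prod_pi_prod {F : ℝ × V3 × ℝ → ℝ} {a b : V3 → ℝ} {u : V3 → V3} {x : V3}
    (hF : DifferentiableAt ℝ F (a x, u x, b x)) (ha : DifferentiableAt ℝ a x)
    (hu : ∀ j, DifferentiableAt ℝ (fun y => u y j) x) (hb : DifferentiableAt ℝ b x) (i : Fin 3) :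
    pd i (fun y => F (a y, u y, b y)) x
      = pd i a x * fderiv ℝ F (a x, u x, b x) (1, 0, 0)
        + ∑ j, pd i (fun y => u y j) x * fderiv ℝ F (a x, u x, b x) (0, Pi.single j 1, 0)
        + pd i b x * fderiv ℝ F (a x, u x, b x) (0, 0, 1) := by
  have hu' : DifferentiableAt ℝ u x := differentiableAt_pi.2 hu
  have hcurve : fderiv ℝ (fun y => (a y, u y, b y)) x (Pi.single i 1)
      = (pd i a x, fun j => pd i (fun y => u y j) x, pd i b x) := by
    rw [ha.fderiv_prodMk (hu'.prodMk hb), hu'.fderiv_prodMk hb,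
      show u = fun y j => u y j from rfl, fderiv_pi hu]
    rfl
  rw [pd, fderiv_fun_comp x hF (ha.prodMk (hu'.prodMk hb)), ContinuousLinearMap.comp_apply,
    hcurve, ContinuousLinearMap.apply_prod_pi_prod]

namespace KortewegFluid

variable (K : KortewegFluid) {x : V3}

lemma contDiffOn_ι : ContDiffOn ℝ ∞ K.ι K.B :=
  K.hρ.inv fun y hy => (K.hρpos y hy).ne'

lemma contDiffOn_pt : ContDiffOn ℝ ∞ K.pt K.B :=
  K.contDiffOn_ι.prodMk
    ((contDiffOn_pi.2 fun j => K.contDiffOn_ι.pd K.hB j).prodMk K.hη)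

lemma contDiffOn_dφι : ContDiffOn ℝ ∞ K.dφι K.B :=
  K.hφ.contDiffOn_fderiv_comp_apply K.contDiffOn_pt _

lemma contDiffOn_dφg (j : Fin 3) : ContDiffOn ℝ ∞ (fun y => K.dφg y j) K.B :=
  K.hφ.contDiffOn_fderiv_comp_apply K.contDiffOn_pt _

lemma contDiffOn_divρg : ContDiffOn ℝ ∞ K.divρg K.B :=
  ContDiffOn.sum fun j _ => (K.hρ.mul (K.contDiffOn_dφg j)).pd K.hB j

lemma contDiffOn_pcheck : ContDiffOn ℝ ∞ K.pcheck K.B := by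
  have hv (j : Fin 3) : ContDiffOn ℝ ∞ (fun y => K.v y j) K.B := contDiffOn_pi.1 K.hv j
  have hιdot : ContDiffOn ℝ ∞ K.ιdot K.B :=
    ContDiffOn.sum fun j _ => (hv j).mul (K.contDiffOn_ι.pd K.hB j)
  have hχ' (w : ℝ × ℝ) : ContDiffOn ℝ ∞ (fun y => fderiv ℝ K.χ (K.ι y, K.ιdot y) w) K.B :=
    K.hχ.contDiffOn_fderiv_comp_apply (K.contDiffOn_ι.prodMk hιdot) w
  exact ((K.hρ.mul K.contDiffOn_ι).mul
    (ContDiffOn.sum fun j _ => (hv j).mul ((hχ' (0, 1)).pd K.hB j))).sub (hχ' (1, 0))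

lemma differentiableAt_of_contDiffOn {f : V3 → ℝ} (hf : ContDiffOn ℝ ∞ f K.B) (hx : x ∈ K.B) :
    DifferentiableAt ℝ f x :=
  (hf.contDiffAt (K.hB.mem_nhds hx)).differentiableAt (by simp)

lemma pbar_eventuallyEq (hx : x ∈ K.B) :
    K.pbar =ᶠ[𝓝 x] fun y => -K.dφι y + K.ι y * K.divρg y - K.pcheck y := by
  filter_upwards [K.hB.mem_nhds hx] with y hy
  rw [pbar, ι, mul_inv_cancel₀ (K.hρpos y hy).ne', one_mul]

lemma pd_pbar (hx : x ∈ K.B) (i : Fin 3) :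
    pd i K.pbar x
      = -pd i K.dφι x + (K.ι x * pd i K.divρg x + K.divρg x * pd i K.ι x) - pd i K.pcheck x := by
  have hdφι := K.differentiableAt_of_contDiffOn K.contDiffOn_dφι hx
  have hι := K.differentiableAt_of_contDiffOn K.contDiffOn_ι hx
  have hdiv := K.differentiableAt_of_contDiffOn K.contDiffOn_divρg hx
  rw [pd_congr_of_eventuallyEq (K.pbar_eventuallyEq hx),
    pd_sub (hdφι.fun_neg.fun_add (hι.fun_mul hdiv))
      (K.differentiableAt_of_contDiffOn K.contDiffOn_pcheck hx),
    pd_add hdφι.fun_neg (hι.fun_mul hdiv), pd_neg, pd_mul hι hdiv]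

lemma pd_φ_pt (hx : x ∈ K.B) (i : Fin 3) :
    pd i (fun y => K.φ (K.pt y)) x
      = pd i K.ι x * K.dφι x + ∑ j, pd i (pd j K.ι) x * K.dφg x j + pd i K.η x * K.temp x :=
  pd_comp_prod_pi_prod ((K.hφ.differentiable (by simp)).differentiableAt)
    (K.differentiableAt_of_contDiffOn K.contDiffOn_ι hx)
    (fun j => K.differentiableAt_of_contDiffOn (K.contDiffOn_ι.pd K.hB j) hx)
    (K.differentiableAt_of_contDiffOn K.hη hx) i

lemma pd_ξ (hx : x ∈ K.B) (i : Fin 3) :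
    pd i K.ξ x
      = pd i K.η x * K.temp x - K.ι x * pd i K.dφι x
        - ∑ j, pd i (fun y => K.dφg y j) x * pd j K.ι x := by
  have hι := K.differentiableAt_of_contDiffOn K.contDiffOn_ι hx
  have hdφι := K.differentiableAt_of_contDiffOn K.contDiffOn_dφι hx
  have hdφg (j : Fin 3) := K.differentiableAt_of_contDiffOn (K.contDiffOn_dφg j) hx
  have hgrad (j : Fin 3) := K.differentiableAt_of_contDiffOn (K.contDiffOn_ι.pd K.hB j) hx
  have hφpt : DifferentiableAt ℝ (fun y => K.φ (K.pt y)) x :=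
    K.differentiableAt_of_contDiffOn (K.hφ.comp_contDiffOn K.contDiffOn_pt) hx
  have hdot : DifferentiableAt ℝ (fun y => ∑ j, K.dφg y j * pd j K.ι y) x :=
    DifferentiableAt.fun_sum fun j _ => (hdφg j).fun_mul (hgrad j)
  have hpd_dot : pd i (fun y => ∑ j, K.dφg y j * pd j K.ι y) x
      = ∑ j, pd i (pd j K.ι) x * K.dφg x j + ∑ j, pd i (fun y => K.dφg y j) x * pd j K.ι x := by
    rw [pd_sum (fun j _ => (hdφg j).fun_mul (hgrad j)), ← Finset.sum_add_distrib]
    exact Finset.sum_congr rfl fun j _ => by rw [pd_mul (hdφg j) (hgrad j)]; ring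
  rw [show K.ξ = fun y => K.φ (K.pt y) - K.ι y * K.dφι y - ∑ j, K.dφg y j * pd j K.ι y from rfl,
    pd_sub (hφpt.fun_sub (hι.fun_mul hdφι)) hdot, pd_sub hφpt (hι.fun_mul hdφι), pd_mul hι hdφι,
    hpd_dot, K.pd_φ_pt hx]
  ring

end KortewegFluid

/-- for a steady Korteweg fluid (no momentum balance assumed),
at every point of `B` (componentwise):
`−ι grad p̄ = ϑ grad η − grad ξ + ι grad p̌ − ι² grad(div(ρ ∂_gφ))`
`  − (grad(∂_gφ))ᵀ grad ι − ι (div(ρ ∂_gφ)) grad ι`. -/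
theorem korteweg_pressure_gradient_identity (K : KortewegFluid) :
    ∀ x ∈ K.B, ∀ i : Fin 3,
      -(K.ι x * pd i K.pbar x)
        = K.temp x * pd i K.η x
          - pd i K.ξ x
          + K.ι x * pd i K.pcheck x
          - (K.ι x) ^ 2 * pd i K.divρg x
          - (∑ j, pd i (fun y => K.dφg y j) x * pd j K.ι x)
          - K.ι x * K.divρg x * pd i K.ι x := by
  intro x hx i
  rw [K.pd_pbar hx i, K.pd_ξ hx i]
  ring
end
end

section
/- Vorticity transport for an unsteady incompressible complex fluid: let B ⊆ ℝ³ be open, ρ₀ > 0 a constant, ι = 1/ρ₀, and let v : ℝ × B → ℝ³, p : ℝ × B → ℝ, E : ℝ × B → ℝ^{3×3} be smooth time-dependent fields with div v(t,·) = 0 for every t. If the momentum balance ρ₀(∂_t v + (Dv)v) = div(−p I − E) holds (all spatial differential operators taken in x at each fixed t), then the vorticity ω = curl v satisfies, at every point: ∂_t ω + (v·grad)ω = (ω·grad)v − ι curl(div E). -/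
noncomputable section

/-!
Taking the curl of the momentum balance removes the pressure, whose Hessian is symmetric.
Differentiating `(Dv) v` and commuting mixed partials of `v` turns its curl into
`(v·grad) ω + axial(A²)` with `A = Dv`, and the matrix identity
`axial(A²) = (tr A) axial A − A axial A` turns that into `(v·grad) ω − (ω·grad) v + (div v) ω`;
incompressibility removes the last term. All derivatives are taken on space-time `ℝ × ℝ³`, as
directional derivatives along `timeDir` and `spaceDir j`, so that mixed partials, time-space ones
included, commute by the symmetry of the second derivative.
-/

open Set Matrix

section SecondDerivative

variable {F : Type*} [NormedAddCommGroup F] [NormedSpace ℝ F] {U : Set F} {u : F → ℝ} {z : F}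

theorem ContDiffOn.hasFDerivAt_fderiv_apply (hu : ContDiffOn ℝ 2 u U) (hU : IsOpen U)
    (hz : z ∈ U) (w : F) :
    HasFDerivAt (fun z => fderiv ℝ u z w) ((fderiv ℝ (fderiv ℝ u) z).flip w) z := by
  have hDu : DifferentiableAt ℝ (fderiv ℝ u) z :=
    ((hu.fderiv_of_isOpen hU (by norm_num : (1 : WithTop ℕ∞) + 1 ≤ 2)).differentiableOn
      one_ne_zero z hz).differentiableAt (hU.mem_nhds hz)
  simpa using hDu.hasFDerivAt.clm_apply (hasFDerivAt_const w z)

theorem ContDiffOn.isSymmSndFDerivAt_of_isOpen (hu : ContDiffOn ℝ 2 u U) (hU : IsOpen U)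
    (hz : z ∈ U) : IsSymmSndFDerivAt ℝ u z :=
  (hu.contDiffAt (hU.mem_nhds hz)).isSymmSndFDerivAt (by simp)

theorem ContDiffOn.hasFDerivAt_fderiv_apply' (hu : ContDiffOn ℝ 2 u U) (hU : IsOpen U)
    (hz : z ∈ U) (w : F) :
    HasFDerivAt (fun z => fderiv ℝ u z w) (fderiv ℝ (fderiv ℝ u) z w) z := by
  have hflip : (fderiv ℝ (fderiv ℝ u) z).flip w = fderiv ℝ (fderiv ℝ u) z w :=
    ContinuousLinearMap.ext fun h => hu.isSymmSndFDerivAt_of_isOpen hU hz h w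
  exact hflip ▸ hu.hasFDerivAt_fderiv_apply hU hz w

end SecondDerivative

/-- `Fin 3` addition wraps: `(i, i + 1, i + 2)` is a cyclic permutation of `(0, 1, 2)`. -/
def axialVector (A : Matrix (Fin 3) (Fin 3) ℝ) : V3 :=
  fun i => A (i + 2) (i + 1) - A (i + 1) (i + 2)

theorem axialVector_mul_self (A : Matrix (Fin 3) (Fin 3) ℝ) :
    axialVector (A * A) = A.trace • axialVector A - A *ᵥ axialVector A := by
  ext i
  simp only [axialVector, mul_apply, trace, diag_apply, mulVec, dotProduct, Fin.sum_univ_three,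
    Pi.sub_apply, Pi.smul_apply, smul_eq_mul]
  fin_cases i <;>
    simp only [Fin.zero_eta, Fin.mk_one, Fin.reduceFinMk, Fin.isValue, Fin.reduceAdd, zero_add] <;>
    ring

theorem curl_eq_axialVector (u : V3 → V3) (x : V3) :
    curl u x = axialVector (Matrix.of fun i j => pd j (fun y => u y i) x) := by
  ext i
  fin_cases i <;> rfl

def timeDir : ℝ × V3 := (1, 0)

def spaceDir (j : Fin 3) : ℝ × V3 := (0, Pi.single j 1)

def spaceJacobian (W : ℝ × V3 → V3) (z : ℝ × V3) : Matrix (Fin 3) (Fin 3) ℝ :=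
  Matrix.of fun i j => fderiv ℝ (W · i) z (spaceDir j)

def spaceDiv (T : ℝ × V3 → Fin 3 → Fin 3 → ℝ) (z : ℝ × V3) : V3 :=
  fun i => ∑ j, fderiv ℝ (T · i j) z (spaceDir j)

section Spacetime

variable {t : ℝ} {x : V3} {B : Set V3} {U : Set (ℝ × V3)} {z : ℝ × V3} {ρ₀ : ℝ}
  {u p : ℝ × V3 → ℝ} {v f : ℝ × V3 → V3} {T : ℝ × V3 → Fin 3 → Fin 3 → ℝ}

theorem pd_eq_fderiv (hu : DifferentiableAt ℝ u (t, x)) (j : Fin 3) :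
    pd j (fun y => u (t, y)) x = fderiv ℝ u (t, x) (spaceDir j) := by
  rw [pd, HasFDerivAt.fderiv (f := fun y => u (t, y))
    (hu.hasFDerivAt.comp x (hasFDerivAt_prodMk_right t x))]
  rfl

theorem pd_eq_fderiv_of_eqOn (hB : IsOpen B) (hx : x ∈ B) {g : V3 → ℝ}
    (hg : ∀ y ∈ B, g y = u (t, y)) (hu : DifferentiableAt ℝ u (t, x)) (j : Fin 3) :
    pd j g x = fderiv ℝ u (t, x) (spaceDir j) := by
  rw [← pd_eq_fderiv hu, pd, pd, Filter.EventuallyEq.fderiv_eq]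
  filter_upwards [hB.mem_nhds hx] using hg

theorem deriv_eq_fderiv (hu : DifferentiableAt ℝ u (t, x)) :
    deriv (fun s => u (s, x)) t = fderiv ℝ u (t, x) timeDir := by
  rw [HasDerivAt.deriv (f := fun s => u (s, x))
    (hu.hasFDerivAt.comp t (hasFDerivAt_prodMk_left t x)).hasDerivAt]
  rfl

theorem sum_pd_pressure_stress_eq (hp : DifferentiableAt ℝ p (t, x))
    (hT : DifferentiableAt ℝ T (t, x)) (c : Fin 3) :
    ∑ j, pd j (fun y => -p (t, y) * (if c = j then (1 : ℝ) else 0) - T (t, y) c j) x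
      = -fderiv ℝ p (t, x) (spaceDir c) - spaceDiv T (t, x) c := by
  have hterm : ∀ j, HasFDerivAt (fun z => -p z * (if c = j then (1 : ℝ) else 0) - T z c j)
      ((if c = j then (1 : ℝ) else 0) • -fderiv ℝ p (t, x) - fderiv ℝ (T · c j) (t, x)) (t, x) :=
    fun j => (hp.hasFDerivAt.neg.mul_const _).sub
      (differentiableAt_pi.1 (differentiableAt_pi.1 hT c) j).hasFDerivAt
  simp only [fun j => pd_eq_fderiv (hterm j).differentiableAt j, fun j => (hterm j).fderiv]
  simp [spaceDiv, Finset.sum_sub_distrib, DFunLike.ite_apply]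

theorem momentum_balance_spacetime (hB : IsOpen B) (hv : DifferentiableOn ℝ v (univ ×ˢ B))
    (hp : DifferentiableOn ℝ p (univ ×ˢ B)) (hT : DifferentiableOn ℝ T (univ ×ˢ B))
    (balance : ∀ t : ℝ, ∀ x ∈ B, ∀ i : Fin 3,
      ρ₀ * (deriv (fun s => v (s, x) i) t + ∑ j, pd j (fun y => v (t, y) i) x * v (t, x) j)
        = ∑ j, pd j (fun y => -p (t, y) * (if i = j then (1 : ℝ) else 0) - T (t, y) i j) x) :
    ∀ z ∈ univ ×ˢ B, ∀ c, ρ₀ * (fderiv ℝ (v · c) z timeDir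
      + ∑ j, fderiv ℝ (v · c) z (spaceDir j) * v z j)
        = -fderiv ℝ p z (spaceDir c) - spaceDiv T z c := by
  rintro ⟨s, y⟩ hy c
  have hnhds := (isOpen_univ.prod hB).mem_nhds hy
  have hvc := differentiableAt_pi.1 (hv.differentiableAt hnhds) c
  rw [← sum_pd_pressure_stress_eq (hp.differentiableAt hnhds) (hT.differentiableAt hnhds),
    ← balance s y hy.2 c, deriv_eq_fderiv hvc]
  simp only [pd_eq_fderiv hvc]

theorem curl_eq_axialVector_spaceJacobian (hB : IsOpen B) (hx : x ∈ B) {g : V3 → V3}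
    (hg : ∀ y ∈ B, g y = v (t, y)) (hv : DifferentiableAt ℝ v (t, x)) :
    curl g x = axialVector (spaceJacobian v (t, x)) := by
  rw [curl_eq_axialVector]
  congr 1
  ext i j
  exact pd_eq_fderiv_of_eqOn hB hx (fun y hy => congrFun (hg y hy) i) (differentiableAt_pi.1 hv i) j

theorem ContDiffOn.hasFDerivAt_axialVector_spaceJacobian (hv : ContDiffOn ℝ 2 v U)
    (hU : IsOpen U) (hz : z ∈ U) (i : Fin 3) :
    HasFDerivAt (fun z => axialVector (spaceJacobian v z) i)
      (fderiv ℝ (fderiv ℝ (v · (i + 2))) z (spaceDir (i + 1))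
        - fderiv ℝ (fderiv ℝ (v · (i + 1))) z (spaceDir (i + 2))) z :=
  ((contDiffOn_pi.1 hv _).hasFDerivAt_fderiv_apply' hU hz _).sub
    ((contDiffOn_pi.1 hv _).hasFDerivAt_fderiv_apply' hU hz _)

theorem ContDiffOn.differentiableAt_spaceDiv (hT : ContDiffOn ℝ 2 T U) (hU : IsOpen U)
    (hz : z ∈ U) : DifferentiableAt ℝ (spaceDiv T) z :=
  differentiableAt_pi.2 fun i => (HasFDerivAt.fun_sum fun j _ =>
    (contDiffOn_pi.1 (contDiffOn_pi.1 hT i) j).hasFDerivAt_fderiv_apply hU hz _).differentiableAt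

theorem curl_div_eq_axialVector_spaceJacobian (hB : IsOpen B) (hx : x ∈ B)
    (hT : ContDiffOn ℝ 2 T (univ ×ˢ B)) :
    curl (fun y i => ∑ j, pd j (fun w => T (t, w) i j) y) x
      = axialVector (spaceJacobian (spaceDiv T) (t, x)) := by
  have hU : IsOpen (univ ×ˢ B : Set (ℝ × V3)) := isOpen_univ.prod hB
  refine curl_eq_axialVector_spaceJacobian hB hx (fun y hy => funext fun i => ?_)
    (hT.differentiableAt_spaceDiv hU ⟨trivial, hx⟩)
  have hTy : DifferentiableAt ℝ T (t, y) :=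
    (hT.differentiableOn two_ne_zero).differentiableAt (hU.mem_nhds ⟨trivial, hy⟩)
  exact Finset.sum_congr rfl fun j _ =>
    pd_eq_fderiv (differentiableAt_pi.1 (differentiableAt_pi.1 hTy i) j) j

theorem fderiv_momentum_balance (hU : IsOpen U) (hz : z ∈ U) (hv : ContDiffOn ℝ 2 v U)
    (hp : ContDiffOn ℝ 2 p U) (hf : DifferentiableAt ℝ f z)
    (hbal : ∀ z ∈ U, ∀ c, ρ₀ * (fderiv ℝ (v · c) z timeDir
      + ∑ j, fderiv ℝ (v · c) z (spaceDir j) * v z j) = -fderiv ℝ p z (spaceDir c) - f z c)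
    (c a : Fin 3) :
    ρ₀ * (fderiv ℝ (fderiv ℝ (v · c)) z (spaceDir a) timeDir
      + ∑ j, (spaceJacobian v z c j * spaceJacobian v z j a
        + v z j * fderiv ℝ (fderiv ℝ (v · c)) z (spaceDir a) (spaceDir j)))
    = -fderiv ℝ (fderiv ℝ p) z (spaceDir a) (spaceDir c) - spaceJacobian f z c a := by
  have hvc : ∀ c, ContDiffOn ℝ 2 (v · c) U := contDiffOn_pi.1 hv
  have hvd : ∀ c, DifferentiableAt ℝ (v · c) z := fun c =>
    ((hvc c).differentiableOn two_ne_zero z hz).differentiableAt (hU.mem_nhds hz)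
  have hL := (((hvc c).hasFDerivAt_fderiv_apply hU hz timeDir).add
    (HasFDerivAt.fun_sum (u := Finset.univ) fun j _ =>
      ((hvc c).hasFDerivAt_fderiv_apply hU hz (spaceDir j)).mul (hvd j).hasFDerivAt)).const_mul ρ₀
  have hR := (hp.hasFDerivAt_fderiv_apply hU hz (spaceDir c)).neg.sub
    (differentiableAt_pi.1 hf c).hasFDerivAt
  have hLR := hL.unique (hR.congr_of_eventuallyEq
    (Filter.eventually_of_mem (hU.mem_nhds hz) fun z hz => hbal z hz c))
  simpa [spaceJacobian, mul_add] using DFunLike.congr_fun hLR (spaceDir a)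

theorem vorticity_equation (hU : IsOpen U) (hz : z ∈ U) (hv : ContDiffOn ℝ 2 v U)
    (hp : ContDiffOn ℝ 2 p U) (hf : DifferentiableAt ℝ f z)
    (hbal : ∀ z ∈ U, ∀ c, ρ₀ * (fderiv ℝ (v · c) z timeDir
      + ∑ j, fderiv ℝ (v · c) z (spaceDir j) * v z j) = -fderiv ℝ p z (spaceDir c) - f z c)
    (i : Fin 3) :
    ρ₀ * (fderiv ℝ (fun z => axialVector (spaceJacobian v z) i) z timeDir
      + ∑ j, v z j * fderiv ℝ (fun z => axialVector (spaceJacobian v z) i) z (spaceDir j)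
      - ∑ j, axialVector (spaceJacobian v z) j * spaceJacobian v z i j
      + (spaceJacobian v z).trace * axialVector (spaceJacobian v z) i)
    = -axialVector (spaceJacobian f z) i := by
  have h₁ := fderiv_momentum_balance hU hz hv hp hf hbal (i + 2) (i + 1)
  have h₂ := fderiv_momentum_balance hU hz hv hp hf hbal (i + 1) (i + 2)
  have hp_symm := hp.isSymmSndFDerivAt_of_isOpen hU hz (spaceDir (i + 1)) (spaceDir (i + 2))
  have hA := congrFun (axialVector_mul_self (spaceJacobian v z)) i
  rw [(hv.hasFDerivAt_axialVector_spaceJacobian hU hz i).fderiv]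
  unfold axialVector at hA ⊢
  simp only [Pi.sub_apply, Pi.smul_apply, smul_eq_mul, mul_apply, mulVec, dotProduct,
    mul_comm (spaceJacobian v z i _)] at hA
  simp only [_root_.sub_apply, mul_sub, Finset.sum_sub_distrib, Finset.sum_add_distrib] at h₁ h₂ ⊢
  linear_combination h₁ - h₂ - ρ₀ * hA - hp_symm

end Spacetime

/-- vorticity transport for an unsteady incompressible complex
fluid. If `div v(t,·) = 0` and the momentum balance
`ρ₀(∂_t v + (Dv)v) = div(−p I − E)` holds on `B`, then the vorticity
`ω = curl v` satisfies `∂_t ω + (v·grad)ω = (ω·grad)v − ι curl(div E)`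
(componentwise) at every point, where `ι = 1/ρ₀`. -/
theorem unsteady_vorticity_transport
    (B : Set V3) (hB : IsOpen B)
    (ρ₀ : ℝ) (hρ₀ : 0 < ρ₀) (ι : ℝ) (hι : ι = 1 / ρ₀)
    (v : ℝ × V3 → V3) (p : ℝ × V3 → ℝ) (E : ℝ × V3 → Fin 3 → Fin 3 → ℝ)
    (hv : ContDiffOn ℝ (⊤ : ℕ∞) v (Set.univ ×ˢ B))
    (hp : ContDiffOn ℝ (⊤ : ℕ∞) p (Set.univ ×ˢ B))
    (hE : ContDiffOn ℝ (⊤ : ℕ∞) E (Set.univ ×ˢ B))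
    (hincomp : ∀ t : ℝ, ∀ x ∈ B, (∑ j, pd j (fun y => v (t, y) j) x) = 0)
    (balance : ∀ t : ℝ, ∀ x ∈ B, ∀ i : Fin 3,
      ρ₀ * (deriv (fun s => v (s, x) i) t
              + ∑ j, pd j (fun y => v (t, y) i) x * v (t, x) j)
        = ∑ j, pd j (fun y => -(p (t, y)) * (if i = j then (1:ℝ) else 0) - E (t, y) i j) x) :
    ∀ t : ℝ, ∀ x ∈ B, ∀ i : Fin 3,
      deriv (fun s => curl (fun y => v (s, y)) x i) t
        + (∑ j, v (t, x) j * pd j (fun y => curl (fun w => v (t, w)) y i) x)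
      = (∑ j, curl (fun y => v (t, y)) x j * pd j (fun y => v (t, y) i) x)
        - ι * curl (fun y => fun i' => ∑ j, pd j (fun w => E (t, w) i' j) y) x i := by
  intro t x hx i
  have hU : IsOpen (univ ×ˢ B : Set (ℝ × V3)) := isOpen_univ.prod hB
  have hz : (t, x) ∈ (univ ×ˢ B : Set (ℝ × V3)) := ⟨trivial, hx⟩
  have hv2 : ContDiffOn ℝ 2 v (univ ×ˢ B) := hv.of_le (WithTop.coe_le_coe.mpr le_top)
  have hp2 : ContDiffOn ℝ 2 p (univ ×ˢ B) := hp.of_le (WithTop.coe_le_coe.mpr le_top)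
  have hE2 : ContDiffOn ℝ 2 E (univ ×ˢ B) := hE.of_le (WithTop.coe_le_coe.mpr le_top)
  have hvD := hv2.differentiableOn two_ne_zero
  have hbal := momentum_balance_spacetime hB hvD (hp2.differentiableOn two_ne_zero)
    (hE2.differentiableOn two_ne_zero) balance
  have hvort := vorticity_equation hU hz hv2 hp2 (hE2.differentiableAt_spaceDiv hU hz) hbal i
  have hω : ∀ s, ∀ y ∈ B, curl (fun y => v (s, y)) y = axialVector (spaceJacobian v (s, y)) :=
    fun s y hy => curl_eq_axialVector_spaceJacobian hB hy (fun _ _ => rfl)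
      (hvD.differentiableAt (hU.mem_nhds ⟨trivial, hy⟩))
  have hωd := (hv2.hasFDerivAt_axialVector_spaceJacobian hU hz i).differentiableAt
  have hJ : ∀ c j, pd j (fun y => v (t, y) c) x = spaceJacobian v (t, x) c j := fun c j =>
    pd_eq_fderiv (differentiableAt_pi.1 (hvD.differentiableAt (hU.mem_nhds hz)) c) j
  have htrace : (spaceJacobian v (t, x)).trace = 0 := by
    simpa only [trace, diag, hJ] using hincomp t x hx
  rw [htrace, zero_mul, add_zero] at hvort
  simp only [hω _ x hx, deriv_eq_fderiv hωd, curl_div_eq_axialVector_spaceJacobian hB hx hE2, hJ,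
    fun j => pd_eq_fderiv_of_eqOn hB hx (fun y hy => congrFun (hω t y hy) i) hωd j]
  rw [hι]
  field_simp
  linear_combination hvort
end
end
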